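/- Let A = [a_1, ..., a_r] be an admissible list of integers. Then its adjoint satisfies A* = TW_{a_r - 1} ⋆ TW_{a_{r-1} - 1} ⋆ ... ⋆ TW_{a_1 - 1}, where TW_k is the list of k copies of 2 and ⋆ is the operation [..., x] ⋆ [y, ...] = [..., x + y - 1, ...] merging the adjacent endpoints. -/

import Mathlib

/-- Discriminant of a linear chain: determinant of the tridiagonal matrix. -/
def chainD : List ℤ → ℤ
  | [] => 1
  | [a] => a
  | a :: b :: L => a * chainD (b :: L) - chainD L

/-- A list is admissible if it is nonempty and all entries are at least 2. -/
def Admissible (A : List ℤ) : Prop := A ≠ [] ∧ ∀ x ∈ A, 2 ≤ x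

/-- Inductance e(A) = d(Ā)/d(A). -/
def inductance (A : List ℤ) : ℚ := (chainD A.tail : ℚ) / (chainD A : ℚ)

/-- Plumbing concatenation ⋆ of linear chains. -/
def pstar : List ℤ → List ℤ → List ℤ
  | [], B => B
  | A, [] => A
  | [a], b :: B => (a + b - 1) :: B
  | a :: A, B => a :: pstar A B

/-- TW n : the list of n copies of 2. -/
def TW (n : ℕ) : List ℤ := List.replicate n 2

/-!
On admissible lists the inductance is the Hirzebruch–Jung continued fraction
`1 / (a₁ - 1 / (a₂ - ⋯ - 1 / aᵣ))`, which determines the list because `a₁ = ⌈1 / e⌉`. So it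
suffices to show that `R' = TW_{a₁-1} ⋆ ⋯ ⋆ TW_{aᵣ-1}`, for `R = A.reverse = [a₁, …, aᵣ]`, is
admissible with inductance `1 - e(R)`. Plumbing a string of `k` twos onto `B` acts on the
discriminants as `(d(B), d(B̄)) ↦ (k d(B) + d(B̄), (k - 1) d(B) + d(B̄))`; iterating this along `R`
gives `d(R') = d(R)` and `d(R̄') = d(R) - d(R̄)`.
-/

/-- `chainD A.tail`, but `0` at `[]`, so that `chainD_cons` holds without exception. -/
def chainE : List ℤ → ℤ
  | [] => 0
  | _ :: L => chainD L

lemma chainD_cons (a : ℤ) (L : List ℤ) : chainD (a :: L) = a * chainD L - chainE L := by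
  cases L <;> simp [chainD, chainE]

lemma chainE_of_ne_nil {L : List ℤ} (hL : L ≠ []) : chainE L = chainD L.tail := by
  cases L with
  | nil => exact absurd rfl hL
  | cons => rfl

lemma chainE_mem_Ico : ∀ {L : List ℤ}, (∀ x ∈ L, 2 ≤ x) → chainE L ∈ Set.Ico 0 (chainD L)
  | [], _ => by simp [chainE, chainD]
  | a :: L, h => by
    obtain ⟨hE, hD⟩ := chainE_mem_Ico fun x hx => h x (List.mem_cons_of_mem a hx)
    have ha : 2 ≤ a := h a List.mem_cons_self
    rw [chainD_cons, chainE]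
    constructor <;> nlinarith

lemma chainD_pos {L : List ℤ} (h : ∀ x ∈ L, 2 ≤ x) : 0 < chainD L :=
  (chainE_mem_Ico h).1.trans_lt (chainE_mem_Ico h).2

/-- The continued fraction `1 / (a₁ - 1 / (a₂ - ⋯ - 1 / aᵣ))`; unlike `inductance`, it is `0`
at `[]`. -/
def hjFrac : List ℤ → ℚ
  | [] => 0
  | a :: L => ((a : ℚ) - hjFrac L)⁻¹

lemma hjFrac_mem_Ico : ∀ {L : List ℤ}, (∀ x ∈ L, 2 ≤ x) → hjFrac L ∈ Set.Ico 0 1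
  | [], _ => by simp [hjFrac]
  | a :: L, h => by
    have hL := hjFrac_mem_Ico fun x hx => h x (List.mem_cons_of_mem a hx)
    have ha : (2 : ℚ) ≤ a := by exact_mod_cast h a List.mem_cons_self
    have hgt : 1 < (a : ℚ) - hjFrac L := by linarith [hL.2]
    exact ⟨inv_nonneg.2 (by linarith), inv_lt_one_of_one_lt₀ hgt⟩

lemma hjFrac_cons_pos {a : ℤ} {L : List ℤ} (h : ∀ x ∈ a :: L, 2 ≤ x) : 0 < hjFrac (a :: L) := by
  have hL := hjFrac_mem_Ico fun x hx => h x (List.mem_cons_of_mem a hx)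
  have ha : (2 : ℚ) ≤ a := by exact_mod_cast h a List.mem_cons_self
  exact inv_pos.2 (by linarith [hL.2])

lemma ceil_sub_hjFrac (a : ℤ) {L : List ℤ} (h : ∀ x ∈ L, 2 ≤ x) : ⌈(a : ℚ) - hjFrac L⌉ = a := by
  have hL := hjFrac_mem_Ico h
  rw [Int.ceil_eq_iff]
  constructor <;> linarith [hL.1, hL.2]

lemma hjFrac_injOn : Set.InjOn hjFrac {L | ∀ x ∈ L, 2 ≤ x} := by
  intro L hL M hM h
  induction L generalizing M with
  | nil =>
    cases M with
    | nil => rfl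
    | cons b M => exact absurd h (hjFrac_cons_pos hM).ne
  | cons a L ih =>
    cases M with
    | nil => exact absurd h (hjFrac_cons_pos hL).ne'
    | cons b M =>
      have hL' : ∀ x ∈ L, 2 ≤ x := fun x hx => hL x (List.mem_cons_of_mem a hx)
      have hM' : ∀ x ∈ M, 2 ≤ x := fun x hx => hM x (List.mem_cons_of_mem b hx)
      have hsub : (a : ℚ) - hjFrac L = b - hjFrac M := inv_injective h
      have hab : a = b := by rw [← ceil_sub_hjFrac a hL', hsub, ceil_sub_hjFrac b hM']
      subst hab
      rw [ih hL' hM' (by linarith)]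

lemma chainE_div_chainD : ∀ {L : List ℤ}, (∀ x ∈ L, 2 ≤ x) →
    (chainE L : ℚ) / chainD L = hjFrac L
  | [], _ => by simp [chainE, hjFrac]
  | a :: L, h => by
    have hL : ∀ x ∈ L, 2 ≤ x := fun x hx => h x (List.mem_cons_of_mem a hx)
    have hD : (chainD L : ℚ) ≠ 0 := by exact_mod_cast (chainD_pos hL).ne'
    rw [hjFrac, ← chainE_div_chainD hL, chainE, chainD_cons]
    push_cast
    field_simp

lemma Admissible.reverse {A : List ℤ} (h : Admissible A) : Admissible A.reverse :=
  ⟨List.reverse_ne_nil_iff.2 h.1, fun x hx => h.2 x (List.mem_reverse.1 hx)⟩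

lemma inductance_eq_hjFrac {A : List ℤ} (h : Admissible A) : inductance A = hjFrac A := by
  obtain ⟨a, L, rfl⟩ := List.exists_cons_of_ne_nil h.1
  exact chainE_div_chainD h.2

lemma inductance_injOn : Set.InjOn inductance {A | Admissible A} :=
  (hjFrac_injOn.mono fun _ hA => hA.2).congr fun _ hA => (inductance_eq_hjFrac hA).symm

lemma pstar_cons_cons (a c : ℤ) (A B : List ℤ) : pstar (a :: c :: A) B = a :: pstar (c :: A) B := by
  cases B <;> rfl

lemma pstar_ne_nil {A B : List ℤ} (hA : A ≠ []) : pstar A B ≠ [] := by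
  fun_induction pstar A B <;> simp_all

lemma two_le_of_mem_pstar {A B : List ℤ} (hA : ∀ x ∈ A, 2 ≤ x) (hB : ∀ x ∈ B, 2 ≤ x) :
    ∀ x ∈ pstar A B, 2 ≤ x := by
  fun_induction pstar A B with
  | case3 a b B =>
    have ha := hA a List.mem_cons_self
    have hb := hB b List.mem_cons_self
    grind
  | _ => grind

lemma chainD_pstar_TW (k : ℕ) (B : List ℤ) :
    chainD (pstar (TW (k + 1)) B) = (k + 1) * chainD B + chainD B.tail ∧
      chainD (pstar (TW (k + 1)) B).tail = k * chainD B + chainD B.tail := by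
  induction k with
  | zero =>
    cases B with
    | nil => simp [TW, pstar, chainD]
    | cons b B =>
      refine ⟨?_, by simp [TW, pstar]⟩
      show chainD ((2 + b - 1) :: B) = _
      rw [chainD_cons, chainD_cons]
      simp only [List.tail_cons]
      push_cast
      ring
  | succ k ih =>
    have hX : pstar (TW (k + 1 + 1)) B = 2 :: pstar (TW (k + 1)) B := pstar_cons_cons _ _ _ _
    have hne : pstar (TW (k + 1)) B ≠ [] := pstar_ne_nil (by simp [TW])
    rw [hX, chainD_cons, chainE_of_ne_nil hne, List.tail_cons, ih.1, ih.2]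
    push_cast
    constructor <;> ring

/-- `twStar [a₁, …, aᵣ] = TW_{a₁ - 1} ⋆ ⋯ ⋆ TW_{aᵣ - 1}`. -/
def twStar (R : List ℤ) : List ℤ := (R.map fun a => TW (a - 1).toNat).foldr pstar []

lemma twStar_cons (a : ℤ) (R : List ℤ) : twStar (a :: R) = pstar (TW (a - 1).toNat) (twStar R) :=
  rfl

lemma chainD_twStar : ∀ {R : List ℤ}, (∀ x ∈ R, 2 ≤ x) →
    chainD (twStar R) = chainD R ∧ chainD (twStar R).tail = chainD R - chainE R
  | [], _ => by simp [twStar, chainD, chainE]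
  | a :: R, h => by
    obtain ⟨hD, hT⟩ := chainD_twStar fun x hx => h x (List.mem_cons_of_mem a hx)
    have ha : 2 ≤ a := h a List.mem_cons_self
    obtain ⟨k, hk⟩ : ∃ k : ℕ, (a - 1).toNat = k + 1 := ⟨(a - 2).toNat, by omega⟩
    have hka : (k : ℤ) = a - 2 := by omega
    obtain ⟨hD', hT'⟩ := chainD_pstar_TW k (twStar R)
    rw [twStar_cons, hk, hD', hT', hD, hT, chainD_cons, hka, chainE]
    constructor <;> ring

lemma two_le_of_mem_twStar : ∀ {R : List ℤ}, ∀ x ∈ twStar R, 2 ≤ x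
  | [] => by simp [twStar]
  | _ :: _ => two_le_of_mem_pstar (fun _ hx => (List.eq_of_mem_replicate hx).ge) two_le_of_mem_twStar

lemma Admissible.twStar {R : List ℤ} (h : Admissible R) : Admissible (twStar R) := by
  obtain ⟨a, R, rfl⟩ := List.exists_cons_of_ne_nil h.1
  have ha : 2 ≤ a := h.2 a List.mem_cons_self
  exact ⟨pstar_ne_nil (by simp [TW]; omega), two_le_of_mem_twStar⟩

lemma inductance_twStar {R : List ℤ} (h : Admissible R) :
    inductance (twStar R) = 1 - inductance R := by
  obtain ⟨hD, hT⟩ := chainD_twStar h.2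
  have hpos : (chainD R : ℚ) ≠ 0 := by exact_mod_cast (chainD_pos h.2).ne'
  rw [inductance, inductance, hD, hT, chainE_of_ne_nil h.1]
  push_cast
  field_simp

theorem adjoint_eq_pstar_TW (A As : List ℤ) (hA : Admissible A) (hAs : Admissible As)
    (h : inductance As = 1 - inductance A.reverse) :
    As = (A.reverse.map (fun a => TW (a - 1).toNat)).foldr pstar [] :=
  inductance_injOn hAs hA.reverse.twStar (h.trans (inductance_twStar hA.reverse).symm)
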